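/- Let φ(x) = |x|² on ℝ⁶ and A, B ∈ {1,2,3,4}. For all u, v ∈ C₀¹(ℝ⁶, ℂ) (continuously differentiable with compact support), ∫_{ℝ⁶} (∇^{AB}u)(x)·conj(v(x))·e^{−φ(x)} dx = ∫_{ℝ⁶} u(x)·conj((Θ_{AB}v)(x))·e^{−φ(x)} dx; i.e. the formal adjoint of ∇^{AB} in the weighted L² inner product is Θ_{AB}. -/

import Mathlib

open scoped BigOperators ComplexConjugate ENNReal
open MeasureTheory

set_option maxHeartbeats 1000000

noncomputable section

/-- The index set `{1,2,3,4}` of spinor indices. -/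
abbrev Idx := Fin 4

/-- Tensors with `q` (antisymmetric) superscripts and `p` (symmetric) subscripts,
each index ranging over `{1,2,3,4}`. -/
abbrev Tens (q p : ℕ) := (Fin q → Idx) → (Fin p → Idx) → ℂ

/-- Symmetry in the subscripts. -/
def SymSub {q p : ℕ} (f : Tens q p) : Prop :=
  ∀ (A : Fin q → Idx) (σ : Equiv.Perm (Fin p)) (B : Fin p → Idx), f A (B ∘ σ) = f A B

/-- Antisymmetry in the superscripts. -/
def AntiSup {q p : ℕ} (f : Tens q p) : Prop :=
  ∀ (σ : Equiv.Perm (Fin q)) (A : Fin q → Idx) (B : Fin p → Idx),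
    f (A ∘ σ) B = ((Equiv.Perm.sign σ : ℤ) : ℂ) * f A B

/-- Membership in `V_l = ⊙^p ℂ⁴ ⊗ ∧^q ℂ⁴`: symmetric in subscripts, antisymmetric in
superscripts. -/
def IsMixed {q p : ℕ} (f : Tens q p) : Prop := AntiSup f ∧ SymSub f

/-- Symmetrization `ξ_{(B₁…B_t)}` of a `t`-index tensor. -/
def symmetrize {t : ℕ} (ξ : (Fin t → Idx) → ℂ) : (Fin t → Idx) → ℂ :=
  fun B => ((t.factorial : ℂ))⁻¹ * ∑ σ : Equiv.Perm (Fin t), ξ (B ∘ σ)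

/-- Antisymmetrization `ξ_{[B₁…B_t]}` of a `t`-index tensor. -/
def antisymmetrize {t : ℕ} (ξ : (Fin t → Idx) → ℂ) : (Fin t → Idx) → ℂ :=
  fun B => ((t.factorial : ℂ))⁻¹ * ∑ σ : Equiv.Perm (Fin t),
    ((Equiv.Perm.sign σ : ℤ) : ℂ) * ξ (B ∘ σ)

/-- The contraction `𝒞(f)^{A₁…A_{q}}_{B₁…B_{p}} = Σ_C f^{C A₁…A_q}_{B₁…B_p C}`. -/
def contr {q p : ℕ} (f : Tens (q+1) (p+1)) : Tens q p :=
  fun A B => ∑ C : Idx, f (Fin.cons C A) (Fin.snoc B C)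

/-- The Hermitian inner product on tensors, induced from `⊗^k ℂ⁴`. -/
def tinner {q p : ℕ} (f h : Tens q p) : ℂ :=
  ∑ A : Fin q → Idx, ∑ B : Fin p → Idx, f A B * conj (h A B)

/-- The squared norm of a tensor. -/
def tnormSq {q p : ℕ} (f : Tens q p) : ℝ :=
  ∑ A : Fin q → Idx, ∑ B : Fin p → Idx, Complex.normSq (f A B)
/-- Points of `ℝ⁶`, with coordinates `x 0, …, x 5`. -/
abbrev Pt := Fin 6 → ℝ

/-- Coefficients (in front of `∂_{x_j}`) of the operators `∇^{AB}`:
`∇^{12}=i∂₀+∂₅`, `∇^{13}=∂₃+i∂₄`, `∇^{14}=∂₁+i∂₂`, `∇^{23}=∂₁−i∂₂`,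
`∇^{24}=−∂₃+i∂₄`, `∇^{34}=−i∂₀+∂₅`, antisymmetric. -/
def nablaCoeff : Fin 4 → Fin 4 → Fin 6 → ℂ :=
  ![![(0 : Fin 6 → ℂ), ![Complex.I,0,0,0,0,1], ![0,0,0,1,Complex.I,0], ![0,1,Complex.I,0,0,0]],
    ![-![Complex.I,0,0,0,0,1], (0 : Fin 6 → ℂ), ![0,1,-Complex.I,0,0,0], ![0,0,0,-1,Complex.I,0]],
    ![-![0,0,0,1,Complex.I,0], -![0,1,-Complex.I,0,0,0], (0 : Fin 6 → ℂ), ![-Complex.I,0,0,0,0,1]],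
    ![-![0,1,Complex.I,0,0,0], -![0,0,0,-1,Complex.I,0], -![-Complex.I,0,0,0,0,1], (0 : Fin 6 → ℂ)]]

/-- The partial derivative `∂_{x_j} u (x)` of a complex valued function on `ℝ⁶`. -/
def pd (j : Fin 6) (u : Pt → ℂ) (x : Pt) : ℂ := fderiv ℝ u x (Pi.single j 1)

/-- The first order constant coefficient differential operator `∇^{AB}`. -/
def nabla (A B : Fin 4) (u : Pt → ℂ) (x : Pt) : ℂ :=
  ∑ j : Fin 6, nablaCoeff A B j * pd j u x

/-- `ε_{ABCD}`: the sign of the permutation `(1,2,3,4) ↦ (A,B,C,D)`, `0` if indices repeat. -/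
def eps (A B C D : Fin 4) : ℤ :=
  if h : Function.Bijective ![A,B,C,D] then (Equiv.Perm.sign (Equiv.ofBijective _ h) : ℤ) else 0

/-- The lowered operator `∇_{AB} := (1/2) Σ_{C,D} ε_{ABCD} ∇^{CD}`. -/
def nablaLow (A B : Fin 4) (u : Pt → ℂ) (x : Pt) : ℂ :=
  (2 : ℂ)⁻¹ * ∑ C : Fin 4, ∑ D : Fin 4, ((eps A B C D : ℤ) : ℂ) * nabla C D u x

/-- The weight `φ(x) = |x|²`. -/
def phi (x : Pt) : ℝ := ∑ j : Fin 6, (x j)^2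

/-- `Θ_{AB} u := −e^{φ} ∇_{AB}(e^{−φ} u)`, the formal adjoint of `∇^{AB}` in `L²_φ`. -/
def Theta (A B : Fin 4) (u : Pt → ℂ) (x : Pt) : ℂ :=
  - (Real.exp (phi x) : ℂ) * nablaLow A B (fun y => (Real.exp (-(phi y)) : ℂ) * u y) x

/-- The operator `𝒟_l`:
`(𝒟_l f)^{A₁…A_{l+1}}_{B₂…B_{k−l}} = Σ_{B₁} ∇^{B₁[A₁} f^{A₂…A_{l+1}]}_{B₁B₂…B_{k−l}}`,
where `[⋯]` antisymmetrizes the superscripts. -/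
def Dop {q p : ℕ} (u : Pt → Tens q (p+1)) (x : Pt) : Tens (q+1) p :=
  fun A B => antisymmetrize
    (fun A' => ∑ B₁ : Idx, nabla B₁ (A' 0) (fun y => u y (Fin.tail A') (Fin.cons B₁ B)) x) A

/-- The formal adjoint `𝒟_l^⋆`:
`(𝒟_l^⋆ f)^{A₁…A_l}_{B₁…B_{k−l}} = −Σ_E Θ_{E(B₁} f^{EA₁…A_l}_{B₂…B_{k−l})}`,
where `(⋯)` symmetrizes the subscripts. -/
def DopStar {q p : ℕ} (u : Pt → Tens (q+1) p) (x : Pt) : Tens q (p+1) :=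
  fun A B => - symmetrize
    (fun B' => ∑ E : Idx, Theta E (B' 0) (fun y => u y (Fin.cons E A) (Fin.tail B')) x) B

/-- A tensor-valued function is smooth iff all its components are. -/
def TensSmooth {q p : ℕ} (u : Pt → Tens q p) : Prop :=
  ∀ A B, ContDiff ℝ (⊤ : ℕ∞) fun x => u x A B

/-- A tensor-valued function is compactly supported iff all its components are. -/
def TensCpt {q p : ℕ} (u : Pt → Tens q p) : Prop :=
  ∀ A B, HasCompactSupport fun x => u x A B

namespace NFA

/-! ### The epsilon table -/

def epsT : Fin 4 → Fin 4 → Fin 4 → Fin 4 → ℤ :=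
  ![![![![0,0,0,0],![0,0,0,0],![0,0,0,0],![0,0,0,0]],![![0,0,0,0],![0,0,0,0],![0,0,0,1],![0,0,-1,0]],![![0,0,0,0],![0,0,0,-1],![0,0,0,0],![0,1,0,0]],![![0,0,0,0],![0,0,1,0],![0,-1,0,0],![0,0,0,0]]],
    ![![![0,0,0,0],![0,0,0,0],![0,0,0,-1],![0,0,1,0]],![![0,0,0,0],![0,0,0,0],![0,0,0,0],![0,0,0,0]],![![0,0,0,1],![0,0,0,0],![0,0,0,0],![-1,0,0,0]],![![0,0,-1,0],![0,0,0,0],![1,0,0,0],![0,0,0,0]]],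
    ![![![0,0,0,0],![0,0,0,1],![0,0,0,0],![0,-1,0,0]],![![0,0,0,-1],![0,0,0,0],![0,0,0,0],![1,0,0,0]],![![0,0,0,0],![0,0,0,0],![0,0,0,0],![0,0,0,0]],![![0,1,0,0],![-1,0,0,0],![0,0,0,0],![0,0,0,0]]],
    ![![![0,0,0,0],![0,0,-1,0],![0,1,0,0],![0,0,0,0]],![![0,0,1,0],![0,0,0,0],![-1,0,0,0],![0,0,0,0]],![![0,-1,0,0],![1,0,0,0],![0,0,0,0],![0,0,0,0]],![![0,0,0,0],![0,0,0,0],![0,0,0,0],![0,0,0,0]]]]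

lemma eps_eq (A B C D : Fin 4) : eps A B C D = epsT A B C D := by revert A B C D; decide

lemma lowCoeff (A B : Fin 4) (j : Fin 6) :
    ∑ C : Fin 4, ∑ D : Fin 4, ((eps A B C D : ℤ) : ℂ) * nablaCoeff C D j
      = 2 * conj (nablaCoeff A B j) := by
  simp only [eps_eq]
  fin_cases A <;> fin_cases B <;> fin_cases j <;>
    norm_num [epsT, nablaCoeff, Fin.sum_univ_four, Complex.ext_iff, Matrix.vecHead,
      Matrix.vecTail, Function.comp, Matrix.cons_val_two, Matrix.cons_val_three, Matrix.cons_val_four]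

/-! ### Derivatives of the weight -/

def phiD (x : Pt) : Pt →L[ℝ] ℝ :=
  ∑ k : Fin 6, (2 * x k) • ContinuousLinearMap.proj (R := ℝ) (φ := fun _ : Fin 6 => ℝ) k

lemma hasFDerivAt_phi (x : Pt) : HasFDerivAt phi (phiD x) x := by
  have h : ∀ k : Fin 6, HasFDerivAt (fun y : Pt => (y k)^2)
      ((2 * x k) • ContinuousLinearMap.proj (R := ℝ) (φ := fun _ : Fin 6 => ℝ) k) x := by
    intro k
    have h : HasFDerivAt (fun y : Pt => y k)
        (ContinuousLinearMap.proj (R := ℝ) (φ := fun _ : Fin 6 => ℝ) k) x :=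
      (ContinuousLinearMap.proj (R := ℝ) (φ := fun _ : Fin 6 => ℝ) k).hasFDerivAt
    have hm := h.fun_mul h
    have e1 : (fun y : Pt => (y k)^2) = fun y : Pt => y k * y k := by ext y; ring
    rw [e1]
    refine hm.congr_fderiv ?_
    ext w
    simp [two_mul, add_smul, mul_smul]
  exact HasFDerivAt.fun_sum (fun k _ => h k)

lemma phiD_apply (x : Pt) (j : Fin 6) : phiD x (Pi.single j 1) = 2 * x j := by
  simp [phiD, ContinuousLinearMap.sum_apply, Pi.single_apply, Finset.sum_ite_eq', mul_ite]

lemma contDiff_phi : ContDiff ℝ 1 phi := by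
  unfold phi
  exact ContDiff.sum fun i _ =>
    (ContinuousLinearMap.contDiff
      (ContinuousLinearMap.proj (R := ℝ) (φ := fun _ : Fin 6 => ℝ) i)).pow 2

lemma hasFDerivAt_E (x : Pt) :
    HasFDerivAt (fun y : Pt => ((Real.exp (-(phi y)) : ℝ) : ℂ))
      (Complex.ofRealCLM.comp ((- Real.exp (-(phi x))) • phiD x)) x := by
  have h1 : HasFDerivAt (fun y : Pt => -(phi y)) (-(phiD x)) x := (hasFDerivAt_phi x).neg
  have h2 : HasFDerivAt (fun y : Pt => Real.exp (-(phi y)))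
      ((Real.exp (-(phi x))) • (-(phiD x))) x :=
    (Real.hasDerivAt_exp _).comp_hasFDerivAt x h1
  have h3 := Complex.ofRealCLM.hasFDerivAt.comp x h2
  refine h3.congr_fderiv ?_
  ext w
  simp [mul_comm]

lemma contDiff_E : ContDiff ℝ 1 fun y : Pt => ((Real.exp (-(phi y)) : ℝ) : ℂ) :=
  Complex.ofRealCLM.contDiff.comp ((Real.contDiff_exp.of_le le_top).comp contDiff_phi.neg)

/-! ### pd computations -/

lemma pd_mul_E (w : Pt → ℂ) (hw : ContDiff ℝ 1 w) (j : Fin 6) (x : Pt) :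
    pd j (fun y => (Real.exp (-(phi y)) : ℂ) * w y) x
      = (Real.exp (-(phi x)) : ℂ) * (pd j w x - 2 * (x j : ℂ) * w x) := by
  have hw' := (hw.differentiable one_ne_zero x).hasFDerivAt
  have hm := (hasFDerivAt_E x).fun_mul hw'
  unfold pd
  rw [hm.fderiv]
  have hval : (Complex.ofRealCLM.comp ((- Real.exp (-(phi x))) • phiD x)) (Pi.single j 1)
      = ((- Real.exp (-(phi x)) * (2 * x j) : ℝ) : ℂ) := by
    simp [phiD_apply]
  simp only [ContinuousLinearMap.add_apply, ContinuousLinearMap.smul_apply, hval,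
    smul_eq_mul]
  push_cast
  ring

lemma pd_conj (v : Pt → ℂ) (j : Fin 6) (x : Pt) :
    pd j (fun y => conj (v y)) x = conj (pd j v x) := by
  unfold pd
  have h : (fun y : Pt => conj (v y)) = fun y : Pt => star (v y) := rfl
  rw [h, fderiv_star]
  rfl

/-! ### The auxiliary weight function -/

def G (v : Pt → ℂ) : Pt → ℂ := fun y => (Real.exp (-(phi y)) : ℂ) * conj (v y)

lemma contDiff_conj {v : Pt → ℂ} (hv : ContDiff ℝ 1 v) :
    ContDiff ℝ 1 fun y : Pt => conj (v y) := by
  have h := ((starL' ℝ : ℂ ≃L[ℝ] ℂ).contDiff (n := 1)).comp hv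
  exact h

lemma contDiff_G {v : Pt → ℂ} (hv : ContDiff ℝ 1 v) : ContDiff ℝ 1 (G v) :=
  contDiff_E.mul (contDiff_conj hv)

lemma pd_G (v : Pt → ℂ) (hv : ContDiff ℝ 1 v) (j : Fin 6) (x : Pt) :
    pd j (G v) x
      = (Real.exp (-(phi x)) : ℂ) * (conj (pd j v x) - 2 * (x j : ℂ) * conj (v x)) := by
  have h := pd_mul_E (fun y => conj (v y)) (contDiff_conj hv) j x
  simp only [pd_conj] at h
  exact h

/-! ### Rewriting `nablaLow` and `Theta` -/

lemma nablaLow_eq (A B : Fin 4) (w : Pt → ℂ) (x : Pt) :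
    nablaLow A B w x = ∑ j : Fin 6, conj (nablaCoeff A B j) * pd j w x := by
  unfold nablaLow nabla
  have h1 : ∀ C D : Fin 4, ((eps A B C D : ℤ) : ℂ) * ∑ j : Fin 6, nablaCoeff C D j * pd j w x
      = ∑ j : Fin 6, ((eps A B C D : ℤ) : ℂ) * nablaCoeff C D j * pd j w x := by
    intro C D
    rw [Finset.mul_sum]
    exact Finset.sum_congr rfl fun j _ => by ring
  simp only [h1]
  have h2 : ∀ C : Fin 4,
      ∑ D : Fin 4, ∑ j : Fin 6, ((eps A B C D : ℤ) : ℂ) * nablaCoeff C D j * pd j w x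
      = ∑ j : Fin 6, ∑ D : Fin 4, ((eps A B C D : ℤ) : ℂ) * nablaCoeff C D j * pd j w x :=
    fun C => Finset.sum_comm
  simp only [h2]
  rw [Finset.sum_comm, Finset.mul_sum]
  refine Finset.sum_congr rfl fun j _ => ?_
  have h3 : ∑ C : Fin 4, ∑ D : Fin 4, ((eps A B C D : ℤ) : ℂ) * nablaCoeff C D j * pd j w x
      = (∑ C : Fin 4, ∑ D : Fin 4, ((eps A B C D : ℤ) : ℂ) * nablaCoeff C D j) * pd j w x := by
    rw [Finset.sum_mul]
    exact Finset.sum_congr rfl fun C _ => (Finset.sum_mul _ _ _).symm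
  rw [h3, lowCoeff]
  ring

lemma Theta_eq (A B : Fin 4) (v : Pt → ℂ) (hv : ContDiff ℝ 1 v) (x : Pt) :
    Theta A B v x
      = ∑ j : Fin 6, conj (nablaCoeff A B j) * (2 * (x j : ℂ) * v x - pd j v x) := by
  unfold Theta
  rw [nablaLow_eq]
  have hexp : (Real.exp (phi x) : ℂ) * (Real.exp (-(phi x)) : ℂ) = 1 := by
    rw [← Complex.ofReal_mul, ← Real.exp_add]
    simp
  rw [Finset.mul_sum]
  refine Finset.sum_congr rfl fun j _ => ?_
  rw [pd_mul_E v hv j x]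
  linear_combination (conj (nablaCoeff A B j) * (2 * (x j : ℂ) * v x - pd j v x)) * hexp

lemma conj_Theta (A B : Fin 4) (v : Pt → ℂ) (hv : ContDiff ℝ 1 v) (x : Pt) :
    conj (Theta A B v x)
      = ∑ j : Fin 6, nablaCoeff A B j * (2 * (x j : ℂ) * conj (v x) - conj (pd j v x)) := by
  rw [Theta_eq A B v hv x, map_sum]
  refine Finset.sum_congr rfl fun j _ => ?_
  simp only [map_mul, map_sub, Complex.conj_conj, Complex.conj_ofReal, map_ofNat]

/-! ### Continuity and support -/

lemma cont_pd {w : Pt → ℂ} (hw : ContDiff ℝ 1 w) (j : Fin 6) :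
    Continuous fun x => pd j w x :=
  (hw.continuous_fderiv one_ne_zero).clm_apply continuous_const

lemma supp_pd {w : Pt → ℂ} (hw : HasCompactSupport w) (j : Fin 6) :
    HasCompactSupport fun x => pd j w x :=
  (hw.fderiv ℝ).comp_left (g := fun L : Pt →L[ℝ] ℂ => L (Pi.single j 1)) rfl

end NFA

/-- With `φ(x) = |x|²`, the formal adjoint of `∇^{AB}` in the weighted
`L²` inner product is `Θ_{AB}`: for all `u, v ∈ C₀¹(ℝ⁶,ℂ)`,
`∫ (∇^{AB}u) conj(v) e^{−φ} dx = ∫ u conj(Θ_{AB}v) e^{−φ} dx`. -/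
theorem nabla_formal_adjoint (A B : Fin 4) (u v : Pt → ℂ)
    (hu : ContDiff ℝ 1 u) (hv : ContDiff ℝ 1 v)
    (hcu : HasCompactSupport u) (hcv : HasCompactSupport v) :
    ∫ x : Pt, nabla A B u x * conj (v x) * (Real.exp (-(phi x)) : ℂ)
      = ∫ x : Pt, u x * conj (Theta A B v x) * (Real.exp (-(phi x)) : ℂ) := by
  classical
  have hvC : ContDiff ℝ 1 fun y : Pt => conj (v y) := NFA.contDiff_conj hv
  have hGC : ContDiff ℝ 1 (NFA.G v) := NFA.contDiff_G hv
  have hcontG : Continuous (NFA.G v) := hGC.continuous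
  have hcontu : Continuous u := hu.continuous
  have int1 : ∀ j : Fin 6, Integrable (fun x : Pt => NFA.G v x * pd j u x) := fun j =>
    (hcontG.mul (NFA.cont_pd hu j)).integrable_of_hasCompactSupport
      ((NFA.supp_pd hcu j).mul_left)
  have int2 : ∀ j : Fin 6, Integrable (fun x : Pt => pd j (NFA.G v) x * u x) := fun j =>
    ((NFA.cont_pd hGC j).mul hcontu).integrable_of_hasCompactSupport hcu.mul_left
  have int3 : Integrable (fun x : Pt => NFA.G v x * u x) :=
    (hcontG.mul hcontu).integrable_of_hasCompactSupport hcu.mul_left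
  have ibp : ∀ j : Fin 6, ∫ x : Pt, NFA.G v x * pd j u x = - ∫ x : Pt, pd j (NFA.G v) x * u x := by
    intro j
    have := integral_mul_fderiv_eq_neg_fderiv_mul_of_integrable (μ := volume)
      (f := NFA.G v) (g := u) (v := Pi.single j 1)
      (int2 j) (int1 j) int3 (fun x _ => hGC.differentiable one_ne_zero x) (fun x _ => hu.differentiable one_ne_zero x)
    exact this
  have key : ∀ j : Fin 6,
      ∫ x : Pt, NFA.G v x * pd j u x
        = ∫ x : Pt, u x * ((2 * (x j : ℂ) * conj (v x) - conj (pd j v x))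
            * (Real.exp (-(phi x)) : ℂ)) := by
    intro j
    rw [ibp j, ← integral_neg]
    have hpt : ∀ x : Pt, -(pd j (NFA.G v) x * u x)
        = u x * ((2 * (x j : ℂ) * conj (v x) - conj (pd j v x))
            * (Real.exp (-(phi x)) : ℂ)) := by
      intro x
      rw [NFA.pd_G v hv j x]
      ring
    simp only [hpt]
  have int4 : ∀ j : Fin 6, Integrable (fun x : Pt =>
      nablaCoeff A B j * (u x * ((2 * (x j : ℂ) * conj (v x) - conj (pd j v x))
        * (Real.exp (-(phi x)) : ℂ)))) := by
    intro j
    have hcont : Continuous fun x : Pt =>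
        u x * ((2 * (x j : ℂ) * conj (v x) - conj (pd j v x))
          * (Real.exp (-(phi x)) : ℂ)) := by
      refine hcontu.mul (Continuous.mul (Continuous.sub ?_ ?_) ?_)
      · exact (continuous_const.mul (Complex.continuous_ofReal.comp (continuous_apply j))).mul
          hv.continuous.star
      · exact (NFA.cont_pd hv j).star
      · exact Complex.continuous_ofReal.comp
          ((Real.continuous_exp.comp (NFA.contDiff_phi.continuous.neg)))
    have hsupp : HasCompactSupport fun x : Pt =>
        u x * ((2 * (x j : ℂ) * conj (v x) - conj (pd j v x))
          * (Real.exp (-(phi x)) : ℂ)) := hcu.mul_right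
    exact (hcont.integrable_of_hasCompactSupport hsupp).const_mul _
  have hL : ∀ x : Pt, nabla A B u x * conj (v x) * (Real.exp (-(phi x)) : ℂ)
      = ∑ j : Fin 6, nablaCoeff A B j * (NFA.G v x * pd j u x) := by
    intro x
    simp only [NFA.G, nabla, Finset.sum_mul]
    exact Finset.sum_congr rfl fun j _ => by ring
  have hR : ∀ x : Pt,
      (∑ j : Fin 6, nablaCoeff A B j * (u x * ((2 * (x j : ℂ) * conj (v x)
          - conj (pd j v x)) * (Real.exp (-(phi x)) : ℂ))))
        = u x * conj (Theta A B v x) * (Real.exp (-(phi x)) : ℂ) := by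
    intro x
    rw [NFA.conj_Theta A B v hv x, Finset.mul_sum, Finset.sum_mul]
    exact Finset.sum_congr rfl fun j _ => by ring
  calc (∫ x : Pt, nabla A B u x * conj (v x) * (Real.exp (-(phi x)) : ℂ))
      = ∫ x : Pt, ∑ j : Fin 6, nablaCoeff A B j * (NFA.G v x * pd j u x) := by
        simp only [hL]
    _ = ∑ j : Fin 6, ∫ x : Pt, nablaCoeff A B j * (NFA.G v x * pd j u x) :=
        integral_finset_sum _ (fun j _ => (int1 j).const_mul _)
    _ = ∑ j : Fin 6, nablaCoeff A B j * ∫ x : Pt, NFA.G v x * pd j u x :=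
        Finset.sum_congr rfl fun j _ => integral_const_mul _ _
    _ = ∑ j : Fin 6, nablaCoeff A B j * ∫ x : Pt,
          u x * ((2 * (x j : ℂ) * conj (v x) - conj (pd j v x))
            * (Real.exp (-(phi x)) : ℂ)) :=
        Finset.sum_congr rfl fun j _ => by rw [key j]
    _ = ∑ j : Fin 6, ∫ x : Pt, nablaCoeff A B j * (u x * ((2 * (x j : ℂ) * conj (v x)
          - conj (pd j v x)) * (Real.exp (-(phi x)) : ℂ))) :=
        Finset.sum_congr rfl fun j _ => (integral_const_mul _ _).symm
    _ = ∫ x : Pt, ∑ j : Fin 6, nablaCoeff A B j * (u x * ((2 * (x j : ℂ) * conj (v x)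
          - conj (pd j v x)) * (Real.exp (-(phi x)) : ℂ))) :=
        (integral_finset_sum _ (fun j _ => int4 j)).symm
    _ = ∫ x : Pt, u x * conj (Theta A B v x) * (Real.exp (-(phi x)) : ℂ) := by
        simp only [hR]

end
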